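/- In the Gaussian setting of Example 1, for fixed q_A with q_A ≥ 1, the probability under x̄ ~ N(μ₀, σ²/n) that RB(μ₀|x) > q_A equals 2Φ(a_n(q_A)) − 1 (when q_A² ≤ nλ₀²+1), and this converges to 1 as n → ∞ and as λ₀ → ∞. -/

import Mathlib

open MeasureTheory ProbabilityTheory Filter Real

noncomputable def stdNormalCDF : ℝ → ℝ := fun t => cdf (gaussianReal 0 1) t

instance : MeasureTheory.NullSingletonClass (gaussianReal (0:ℝ) 1) :=
  nullSingletonClass_gaussianReal one_ne_zero

lemma stdNormalCDF_neg (A : ℝ) : stdNormalCDF (-A) = 1 - stdNormalCDF A := by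
  have hmap : (gaussianReal (0:ℝ) 1).map (fun x => (-1:ℝ) * x) = gaussianReal 0 1 := by
    have h := gaussianReal_map_const_mul (μ := (0:ℝ)) (v := 1) (-1)
    have h1 : (NNReal.mk ((-1:ℝ)^2) (sq_nonneg _)) * 1 = 1 := by
      apply NNReal.coe_injective; simp
    rw [h1, mul_zero] at h
    exact h
  unfold stdNormalCDF
  rw [cdf_eq_real, cdf_eq_real, measureReal_def, measureReal_def]
  have hIic : gaussianReal (0:ℝ) 1 (Set.Iic (-A)) = gaussianReal 0 1 (Set.Ici A) := by
    conv_lhs => rw [← hmap]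
    rw [Measure.map_apply (measurable_const_mul _) measurableSet_Iic]
    congr 1
    ext x
    simp only [Set.mem_preimage, Set.mem_Iic, Set.mem_Ici]
    constructor <;> intro h <;> linarith
  rw [hIic, ← Set.compl_Iio, measure_compl measurableSet_Iio (measure_ne_top _ _), measure_univ]
  have hIio : gaussianReal (0:ℝ) 1 (Set.Iio A) = gaussianReal 0 1 (Set.Iic A) :=
    measure_congr Iio_ae_eq_Iic
  rw [hIio, ENNReal.toReal_sub_of_le prob_le_one (by simp), ENNReal.toReal_one]

lemma stdNormal_Ioo (A : ℝ) : gaussianReal (0:ℝ) 1 (Set.Ioo (-A) A)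
    = ENNReal.ofReal (2 * stdNormalCDF A - 1) := by
  have h1 : gaussianReal (0:ℝ) 1 (Set.Ioo (-A) A) = gaussianReal 0 1 (Set.Ioc (-A) A) :=
    measure_congr Ioo_ae_eq_Ioc
  rw [h1]
  conv_lhs => rw [← measure_cdf (gaussianReal (0:ℝ) 1)]
  rw [StieltjesFunction.measure_Ioc]
  have h2 : cdf (gaussianReal (0:ℝ) 1) (-A) = 1 - cdf (gaussianReal (0:ℝ) 1) A :=
    stdNormalCDF_neg A
  rw [h2]
  unfold stdNormalCDF
  congr 1
  ring

lemma my_tendsto_sqrt_atTop : Tendsto Real.sqrt atTop atTop := by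
  rw [tendsto_atTop]
  intro b
  filter_upwards [eventually_ge_atTop ((max b 0)^2)] with x hx
  calc b ≤ max b 0 := le_max_left _ _
    _ = Real.sqrt ((max b 0)^2) := (Real.sqrt_sq (le_max_right _ _)).symm
    _ ≤ Real.sqrt x := Real.sqrt_le_sqrt hx

lemma aux_atTop {α : Type*} {l : Filter α} (qA : ℝ) (hqA : 1 ≤ qA)
    (c : α → ℝ) (hc : Tendsto c l atTop) (g : α → ℝ)
    (hg : ∀ᶠ t in l, g t = Real.sqrt ((1 + 1/(c t)) * Real.log ((c t + 1)/qA^2))) :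
    Tendsto g l atTop := by
  have hq2 : (0:ℝ) < qA^2 := by positivity
  have h1 : Tendsto (fun t => Real.sqrt (Real.log ((c t + 1)/qA^2))) l atTop := by
    apply (my_tendsto_sqrt_atTop.comp Real.tendsto_log_atTop).comp
    exact (tendsto_atTop_add_const_right _ 1 hc).atTop_div_const hq2
  refine tendsto_atTop_mono' l ?_ h1
  filter_upwards [hg, hc.eventually_ge_atTop (max 1 (qA^2 - 1))] with t ht hct
  rw [ht]
  have hct1 : (1:ℝ) ≤ c t := le_trans (le_max_left _ _) hct
  have hctq : qA^2 - 1 ≤ c t := le_trans (le_max_right _ _) hct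
  have hL : 0 ≤ Real.log ((c t + 1)/qA^2) :=
    Real.log_nonneg ((one_le_div hq2).mpr (by linarith))
  apply Real.sqrt_le_sqrt
  have hpos : 0 ≤ 1/(c t) := by positivity
  nlinarith

lemma comp_limit {α : Type*} {l : Filter α} {f : α → ℝ} (hf : Tendsto f l atTop) :
    Tendsto (fun t => 2 * stdNormalCDF (f t) - 1) l (nhds 1) := by
  have h := ((tendsto_cdf_atTop (gaussianReal 0 1)).comp hf).const_mul 2 |>.sub_const 1
  norm_num at h
  exact h

set_option maxHeartbeats 1600000 in
theorem acceptance_prob_formula_and_limits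
    (qA : ℝ) (hqA : 1 ≤ qA) (μ₀ σ : ℝ) (hσ : 0 < σ)
    (a : ℕ → ℝ → ℝ)
    (ha : ∀ (n : ℕ) (lam : ℝ), 0 < lam →
      a n lam = if qA ^ 2 ≤ n * lam ^ 2 + 1 then
          Real.sqrt ((1 + 1 / (n * lam ^ 2)) *
            Real.log ((n * lam ^ 2 + 1) / qA ^ 2))
        else 0)
    (RB : ℕ → ℝ → ℝ → ℝ)
    (hRB : ∀ (n : ℕ) (lam xbar : ℝ), RB n lam xbar =
      Real.sqrt (n * lam ^ 2 + 1) *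
        Real.exp (-(n : ℝ) ^ 2 * lam ^ 2 * (xbar - μ₀) ^ 2
          / (2 * σ ^ 2 * (n * lam ^ 2 + 1)))) :
    (∀ (n : ℕ) (lam : ℝ), 1 ≤ n → 0 < lam → qA ^ 2 ≤ n * lam ^ 2 + 1 →
      gaussianReal μ₀ (Real.toNNReal (σ ^ 2 / n)) {xbar | qA < RB n lam xbar}
        = ENNReal.ofReal (2 * stdNormalCDF (a n lam) - 1)) ∧
      (∀ lam : ℝ, 0 < lam →
        Tendsto (fun n : ℕ => 2 * stdNormalCDF (a n lam) - 1) atTop (nhds 1)) ∧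
      (∀ n : ℕ, 1 ≤ n →
        Tendsto (fun lam : ℝ => 2 * stdNormalCDF (a n lam) - 1) atTop (nhds 1)) := by
  refine ⟨?_, ?_, ?_⟩
  · -- Part 1: the formula
    intro n lam hn hlam hqle
    have hn0 : (0:ℝ) < n := by exact_mod_cast hn
    have hl2 : (0:ℝ) < lam^2 := by positivity
    have hnl : (0:ℝ) < (n:ℝ)*lam^2 := mul_pos hn0 hl2
    have hB : (0:ℝ) < (n:ℝ)*lam^2+1 := by linarith
    have hq2 : (0:ℝ) < qA^2 := by positivity
    have hBq : (1:ℝ) ≤ ((n:ℝ)*lam^2+1)/qA^2 := (one_le_div hq2).mpr hqle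
    have hL : 0 ≤ Real.log (((n:ℝ)*lam^2+1)/qA^2) := Real.log_nonneg hBq
    have hA : a n lam = Real.sqrt ((1+1/((n:ℝ)*lam^2)) * Real.log (((n:ℝ)*lam^2+1)/qA^2)) := by
      rw [ha n lam hlam, if_pos hqle]
    have hfac : (0:ℝ) ≤ (1+1/((n:ℝ)*lam^2)) := by positivity
    have hA0 : 0 ≤ a n lam := hA ▸ Real.sqrt_nonneg _
    have hA2 : (a n lam)^2 = (1+1/((n:ℝ)*lam^2)) * Real.log (((n:ℝ)*lam^2+1)/qA^2) := by
      rw [hA]; exact Real.sq_sqrt (mul_nonneg hfac hL)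
    set s : ℝ := Real.sqrt (σ^2/n) with hsdef
    have hsn : (0:ℝ) < σ^2/n := by positivity
    have hs : 0 < s := Real.sqrt_pos.mpr hsn
    have hs2 : s^2 = σ^2/n := Real.sq_sqrt hsn.le
    set A : ℝ := a n lam
    -- the key equivalence
    have key : ∀ x : ℝ, (qA < RB n lam x) ↔ (x-μ₀)^2 < (s*A)^2 := by
      intro x
      rw [hRB]
      have hsqB : 0 < Real.sqrt ((n:ℝ)*lam^2+1) := Real.sqrt_pos.mpr hB
      have h1 : (qA < Real.sqrt ((n:ℝ)*lam^2+1) *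
          Real.exp (-(n:ℝ)^2*lam^2*(x-μ₀)^2 / (2*σ^2*((n:ℝ)*lam^2+1)))) ↔
          Real.log (qA / Real.sqrt ((n:ℝ)*lam^2+1)) <
            -(n:ℝ)^2*lam^2*(x-μ₀)^2 / (2*σ^2*((n:ℝ)*lam^2+1)) := by
        rw [Real.log_lt_iff_lt_exp (by positivity), div_lt_iff₀ hsqB, mul_comm]
      rw [h1]
      have hlog : Real.log (qA / Real.sqrt ((n:ℝ)*lam^2+1))
          = -(Real.log (((n:ℝ)*lam^2+1)/qA^2) / 2) := by
        rw [Real.log_div (by positivity) (by positivity),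
          Real.log_div (by positivity) (by positivity),
          Real.log_sqrt hB.le, Real.log_pow]
        push_cast
        ring
      rw [hlog]
      have hsA : (s*A)^2 = σ^2 * ((n:ℝ)*lam^2+1) * Real.log (((n:ℝ)*lam^2+1)/qA^2)
          / ((n:ℝ)^2 * lam^2) := by
        rw [mul_pow, hs2, hA2]
        field_simp
      rw [hsA]
      have h2 : -(n:ℝ)^2*lam^2*(x-μ₀)^2 / (2*σ^2*((n:ℝ)*lam^2+1))
          = -((n:ℝ)^2*lam^2*(x-μ₀)^2 / (2*σ^2*((n:ℝ)*lam^2+1))) := by ring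
      rw [h2, neg_lt_neg_iff,
        div_lt_div_iff₀ (by positivity : (0:ℝ) < 2*σ^2*((n:ℝ)*lam^2+1)) (by norm_num : (0:ℝ) < 2),
        lt_div_iff₀ (by positivity : (0:ℝ) < (n:ℝ)^2*lam^2)]
      constructor <;> intro h <;> nlinarith
    have hsA0 : 0 ≤ s*A := mul_nonneg hs.le hA0
    have hsetEq : {xbar | qA < RB n lam xbar} = Set.Ioo (μ₀ - s*A) (μ₀ + s*A) := by
      ext x
      simp only [Set.mem_setOf_eq, Set.mem_Ioo, key x]
      constructor
      · intro h
        have h' : |x - μ₀| < s*A := by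
          rw [← Real.sqrt_sq hsA0, ← Real.sqrt_sq_eq_abs]
          exact Real.sqrt_lt_sqrt (sq_nonneg _) h
        rw [abs_lt] at h'
        constructor <;> linarith [h'.1, h'.2]
      · rintro ⟨h1, h2⟩
        exact sq_lt_sq' (by linarith) (by linarith)
    -- measure computation
    have hvv : (NNReal.mk (s^2) (sq_nonneg s)) * 1 = Real.toNNReal (σ^2/↑n) := by
      apply NNReal.coe_injective
      simp [hs2, Real.coe_toNNReal _ hsn.le]
    have e1 : (gaussianReal (0:ℝ) 1).map (s * ·) = gaussianReal 0 (Real.toNNReal (σ^2/↑n)) := by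
      rw [gaussianReal_map_const_mul, mul_zero, hvv]
    have e2 : (gaussianReal (0:ℝ) (Real.toNNReal (σ^2/↑n))).map (· + μ₀)
        = gaussianReal μ₀ (Real.toNNReal (σ^2/↑n)) := by
      rw [gaussianReal_map_add_const, zero_add]
    have e3 : gaussianReal μ₀ (Real.toNNReal (σ^2/↑n))
        = (gaussianReal (0:ℝ) 1).map (fun x => s*x + μ₀) := by
      rw [← e2, ← e1, Measure.map_map (measurable_add_const μ₀) (measurable_const_mul s)]
      rfl
    have hpre : (fun x => s*x + μ₀) ⁻¹' Set.Ioo (μ₀ - s*A) (μ₀ + s*A) = Set.Ioo (-A) A := by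
      ext x
      simp only [Set.mem_preimage, Set.mem_Ioo]
      constructor
      · rintro ⟨h1, h2⟩
        constructor
        · have : s * (-A) < s * x := by linarith
          exact (mul_lt_mul_iff_right₀ hs).mp this
        · have : s * x < s * A := by linarith
          exact (mul_lt_mul_iff_right₀ hs).mp this
      · rintro ⟨h1, h2⟩
        have l1 := (mul_lt_mul_iff_right₀ hs).mpr h1
        have l2 := (mul_lt_mul_iff_right₀ hs).mpr h2
        constructor <;> [linarith; linarith]
    rw [hsetEq, e3, Measure.map_apply ((measurable_const_mul s).add_const μ₀)
      measurableSet_Ioo, hpre]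
    exact stdNormal_Ioo A
  · -- Part 2: n → ∞
    intro lam hlam
    apply comp_limit
    have hl2 : (0:ℝ) < lam^2 := by positivity
    have hc : Tendsto (fun n : ℕ => (n:ℝ) * lam^2) atTop atTop :=
      tendsto_natCast_atTop_atTop.atTop_mul_const hl2
    apply aux_atTop qA hqA _ hc
    filter_upwards [hc.eventually_ge_atTop (qA^2 - 1)] with n hn
    rw [ha n lam hlam, if_pos (by linarith)]
  · -- Part 3: lam → ∞
    intro n hn
    apply comp_limit
    have hn0 : (0:ℝ) < n := by exact_mod_cast hn
    have hc : Tendsto (fun lam : ℝ => (n:ℝ) * lam^2) atTop atTop :=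
      (tendsto_pow_atTop (two_ne_zero)).const_mul_atTop hn0
    apply aux_atTop qA hqA _ hc
    filter_upwards [hc.eventually_ge_atTop (qA^2 - 1), eventually_gt_atTop (0:ℝ)] with lam hl h0
    rw [ha n lam h0, if_pos (by linarith)]
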